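/- arXiv:2509.15458 — 5 statements merged into one kernel-verified Lean document; each statement's English description precedes it below -/
import Mathlib

section
/- For all positive integers c and s, the Ramsey number R(c,s) satisfies R(c,s) ≤ c^(s-1); that is, every simple graph on at least c^(s-1) vertices contains either an independent set of size c or a clique of size s. -/
open SimpleGraph

namespace Paper

variable {V : Type*}

/-- `S` is an independent (stable) set in `G`. -/
def IsIndep (G : SimpleGraph V) (S : Set V) : Prop :=
  ∀ ⦃a⦄, a ∈ S → ∀ ⦃b⦄, b ∈ S → a ≠ b → ¬ G.Adj a b

/-- The independence number of `S` is at most `k`. -/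
def IndepNumLE (G : SimpleGraph V) (S : Set V) (k : ℕ) : Prop :=
  ∀ T : Finset V, ↑T ⊆ S → IsIndep G ↑T → T.card ≤ k

/-- There are no edges between `A` and `B`. -/
def Anticomplete (G : SimpleGraph V) (A B : Set V) : Prop :=
  ∀ ⦃a⦄, a ∈ A → ∀ ⦃b⦄, b ∈ B → ¬ G.Adj a b

/-- `G` has no induced `K_{t,t}`. -/
def KttFree (G : SimpleGraph V) (t : ℕ) : Prop :=
  ¬ ∃ A B : Finset V, Disjoint A B ∧ A.card = t ∧ B.card = t ∧
      IsIndep G ↑A ∧ IsIndep G ↑B ∧ ∀ a ∈ A, ∀ b ∈ B, G.Adj a b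

/-- `P` is an induced path in `G`. -/
def IsInducedPathW (G : SimpleGraph V) {a b : V} (P : G.Walk a b) : Prop :=
  P.IsPath ∧ ∀ u ∈ P.support, ∀ v ∈ P.support, G.Adj u v → s(u, v) ∈ P.edges

/-- The interior of a path: its support minus the two ends. -/
def interiorSet (G : SimpleGraph V) {a b : V} (P : G.Walk a b) : Set V :=
  {v | v ∈ P.support ∧ v ≠ a ∧ v ≠ b}

/-- `G` contains a theta as an induced subgraph. -/
def ContainsTheta (G : SimpleGraph V) : Prop :=
  ∃ (a b : V) (P₁ P₂ P₃ : G.Walk a b),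
    a ≠ b ∧ ¬ G.Adj a b ∧
    IsInducedPathW G P₁ ∧ IsInducedPathW G P₂ ∧ IsInducedPathW G P₃ ∧
    2 ≤ P₁.length ∧ 2 ≤ P₂.length ∧ 2 ≤ P₃.length ∧
    Disjoint (interiorSet G P₁) (interiorSet G P₂) ∧
    Disjoint (interiorSet G P₁) (interiorSet G P₃) ∧
    Disjoint (interiorSet G P₂) (interiorSet G P₃) ∧
    Anticomplete G (interiorSet G P₁) (interiorSet G P₂) ∧
    Anticomplete G (interiorSet G P₁) (interiorSet G P₃) ∧
    Anticomplete G (interiorSet G P₂) (interiorSet G P₃)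

def ThetaFree (G : SimpleGraph V) : Prop := ¬ ContainsTheta G

/-- `G` contains a pyramid as an induced subgraph. -/
def ContainsPyramid (G : SimpleGraph V) : Prop :=
  ∃ (a : V) (b : Fin 3 → V) (P : ∀ i : Fin 3, G.Walk a (b i)),
    Function.Injective b ∧
    (∀ i j : Fin 3, i ≠ j → G.Adj (b i) (b j)) ∧
    (∀ i, IsInducedPathW G (P i)) ∧
    (∀ i, 1 ≤ (P i).length) ∧
    (∀ i j : Fin 3, i ≠ j → (P i).length = 1 → (P j).length ≠ 1) ∧
    (∀ i j : Fin 3, i ≠ j → ∀ v, v ∈ (P i).support → v ∈ (P j).support → v = a) ∧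
    (∀ i j : Fin 3, i ≠ j → ∀ u ∈ (P i).support, ∀ v ∈ (P j).support,
      u ≠ a → v ≠ a → G.Adj u v → u = b i ∧ v = b j)

def PyramidFree (G : SimpleGraph V) : Prop := ¬ ContainsPyramid G

/-- Open neighborhood of a set. -/
def nbhdS (G : SimpleGraph V) (X : Set V) : Set V := {v | v ∉ X ∧ ∃ x ∈ X, G.Adj x v}

/-- Closed neighborhood of a set. -/
def nbhdC (G : SimpleGraph V) (X : Set V) : Set V := X ∪ nbhdS G X

/-- The boundary of `X` inside the induced subgraph `G[U]`. -/
def delta1 (G : SimpleGraph V) (U X : Set V) : Set V :=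
  {v | v ∈ X ∧ ∃ u ∈ U \ X, G.Adj v u}

def delta2 (G : SimpleGraph V) (U X : Set V) : Set V := delta1 G U (X \ delta1 G U X)

/-- `S` induces a connected subgraph. -/
def ConnSet (G : SimpleGraph V) (S : Set V) : Prop := (G.induce S).Connected

/-- `X` is a cooperative set in the induced subgraph `G[U]`. -/
def Cooperative (G : SimpleGraph V) (U X : Set V) : Prop :=
  X ⊆ U ∧ ConnSet G X ∧
  (∀ v ∈ delta1 G U X, ∃ u ∈ X \ delta1 G U X, G.Adj v u) ∧
  (∀ v ∈ delta2 G U X, ∃ u ∈ X \ (delta1 G U X ∪ delta2 G U X), G.Adj v u) ∧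
  ConnSet G (X \ (delta1 G U X ∪ delta2 G U X))

/-- The finite set `A` is matched into `B` by a matching of `G`. -/
def MatchedInto (G : SimpleGraph V) (A : Finset V) (B : Set V) : Prop :=
  ∃ f : V → V, Set.InjOn f ↑A ∧ ∀ a ∈ A, f a ∈ B ∧ G.Adj a (f a)

/-- There are `|A|` paths from `A` to `b`, pairwise vertex-disjoint except at `b`,
internally disjoint from `N[X]`. -/
def LinkedTo (G : SimpleGraph V) (X : Set V) (A : Finset V) (b : V) : Prop :=
  ∃ P : ∀ a ∈ A, G.Walk a b,
    (∀ a (ha : a ∈ A), (P a ha).IsPath) ∧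
    (∀ a (ha : a ∈ A), ∀ v ∈ (P a ha).support, v ≠ a → v ≠ b → v ∉ nbhdC G X) ∧
    (∀ a (ha : a ∈ A), ∀ a' (ha' : a' ∈ A), a ≠ a' →
      ∀ v, v ∈ (P a ha).support → v ∈ (P a' ha').support → v = b)

/-- `(S, I)` is a matroid. -/
def IsMatroid [DecidableEq V] (S : Set V) (I : Set (Finset V)) : Prop :=
  (∅ ∈ I) ∧ (∀ A ∈ I, ↑A ⊆ S) ∧
  (∀ A B : Finset V, A ⊆ B → B ∈ I → A ∈ I) ∧
  (∀ A B : Finset V, A ∈ I → B ∈ I → A.card < B.card → ∃ x ∈ B, x ∉ A ∧ insert x A ∈ I)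

/-- `D` is a connected component of `G` minus the set `avoid`. -/
def IsCompAvoiding (G : SimpleGraph V) (avoid D : Set V) : Prop :=
  D ⊆ avoidᶜ ∧ ConnSet G D ∧ ∀ u, u ∉ D → u ∉ avoid → ¬ ∃ d ∈ D, G.Adj u d

/-- `Z` is a constricted set. -/
def Constricted (G : SimpleGraph V) (Z : Set V) : Prop :=
  IsIndep G Z ∧ ∀ S : Set V, (G.induce S).IsTree → (Z ∩ S).ncard ≤ 2

end Paper




open Finset in
theorem greedy_indep {V : Type} [DecidableEq V] (G : SimpleGraph V) [DecidableRel G.Adj]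
    (m : ℕ) (hm : 1 ≤ m) : ∀ (k : ℕ) (A : Finset V),
    (∀ v ∈ A, (A.filter (G.Adj v)).card + 1 ≤ m) → k * m ≤ A.card →
    ∃ T : Finset V, T ⊆ A ∧ T.card = k ∧ Paper.IsIndep G ↑T := by
  intro k
  induction k with
  | zero =>
    intro A _ _
    exact ⟨∅, by simp, by simp, by simp [Paper.IsIndep]⟩
  | succ k ih =>
    intro A hdeg hcard
    have hA : 0 < A.card := by nlinarith
    obtain ⟨v, hv⟩ := Finset.card_pos.mp hA
    set B := insert v (A.filter (G.Adj v)) with hB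
    have hBcard : B.card ≤ m := by
      have h1 := Finset.card_insert_le v (A.filter (G.Adj v))
      have h2 := hdeg v hv
      rw [hB]
      omega
    have hcard' : k * m ≤ (A \ B).card := by
      have h1 : A.card ≤ (A \ B).card + B.card := Finset.card_le_card_sdiff_add_card
      nlinarith [hcard]
    have hdeg' : ∀ u ∈ A \ B, ((A \ B).filter (G.Adj u)).card + 1 ≤ m := by
      intro u hu
      have hsub : (A \ B).filter (G.Adj u) ⊆ A.filter (G.Adj u) :=
        Finset.filter_subset_filter _ (Finset.sdiff_subset)
      have := Finset.card_le_card hsub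
      have := hdeg u (Finset.mem_sdiff.mp hu).1
      omega
    obtain ⟨T, hTsub, hTcard, hTind⟩ := ih (A \ B) hdeg' hcard'
    have hvT : v ∉ T := by
      intro hvT
      have := Finset.mem_sdiff.mp (hTsub hvT)
      exact this.2 (Finset.mem_insert_self _ _)
    refine ⟨insert v T, ?_, ?_, ?_⟩
    · intro x hx
      rcases Finset.mem_insert.mp hx with rfl | hx
      · exact hv
      · exact (Finset.mem_sdiff.mp (hTsub hx)).1
    · rw [Finset.card_insert_of_notMem hvT, hTcard]
    · intro a ha b hb hab hadj
      simp only [Finset.coe_insert, Set.mem_insert_iff, Finset.mem_coe] at ha hb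
      have key : ∀ u ∈ T, ¬ G.Adj v u := by
        intro u hu hadj'
        have := Finset.mem_sdiff.mp (hTsub hu)
        exact this.2 (Finset.mem_insert_of_mem (Finset.mem_filter.mpr ⟨this.1, hadj'⟩))
      rcases ha with rfl | ha
      · rcases hb with rfl | hb
        · exact hab rfl
        · exact key b hb hadj
      · rcases hb with rfl | hb
        · exact key a ha hadj.symm
        · exact hTind (by exact_mod_cast ha) (by exact_mod_cast hb) hab hadj

theorem ramsey_aux {V : Type} [DecidableEq V] (G : SimpleGraph V) [DecidableRel G.Adj]
    (c : ℕ) (hc : 0 < c) : ∀ (s : ℕ) (A : Finset V), c ^ s ≤ A.card →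
    (∃ T : Finset V, T ⊆ A ∧ T.card = c ∧ Paper.IsIndep G ↑T) ∨
    (∃ T : Finset V, T ⊆ A ∧ T.card = s + 1 ∧ G.IsClique (↑T : Set V)) := by
  intro s
  induction s with
  | zero =>
    intro A hA
    obtain ⟨v, hv⟩ := Finset.card_pos.mp (by simpa using hA)
    right
    exact ⟨{v}, by simpa using hv, by simp, by simp⟩
  | succ s ih =>
    intro A hA
    by_cases h : ∃ v ∈ A, c ^ s ≤ ((A.erase v).filter (G.Adj v)).card
    · obtain ⟨v, hv, hN⟩ := h
      rcases ih _ hN with ⟨T, hTsub, hTcard, hTind⟩ | ⟨T, hTsub, hTcard, hTcl⟩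
      · left
        exact ⟨T, hTsub.trans ((Finset.filter_subset _ _).trans (Finset.erase_subset _ _)),
          hTcard, hTind⟩
      · right
        have hvT : v ∉ T := fun hvT =>
          Finset.notMem_erase v A (Finset.mem_filter.mp (hTsub hvT)).1
        refine ⟨insert v T, ?_, ?_, ?_⟩
        · intro x hx
          rcases Finset.mem_insert.mp hx with rfl | hx
          · exact hv
          · exact Finset.erase_subset _ _ (Finset.mem_filter.mp (hTsub hx)).1
        · rw [Finset.card_insert_of_notMem hvT, hTcard]
        · rw [Finset.coe_insert]
          refine hTcl.insert ?_
          intro b hb _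
          exact (Finset.mem_filter.mp (hTsub hb)).2
    · push_neg at h
      have hdeg : ∀ v ∈ A, (A.filter (G.Adj v)).card + 1 ≤ c ^ s := by
        intro v hv
        have heq : A.filter (G.Adj v) = (A.erase v).filter (G.Adj v) := by
          ext x
          simp only [Finset.mem_filter, Finset.mem_erase]
          constructor
          · rintro ⟨hx, hadj⟩
            exact ⟨⟨fun hxv => G.irrefl (hxv ▸ hadj), hx⟩, hadj⟩
          · rintro ⟨⟨_, hx⟩, hadj⟩
            exact ⟨hx, hadj⟩
        rw [heq]
        exact h v hv
      obtain ⟨T, hTsub, hTcard, hTind⟩ :=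
        greedy_indep G (c ^ s) (Nat.one_le_pow _ _ hc) c A hdeg
          (by rw [mul_comm, ← pow_succ]; exact hA)
      exact Or.inl ⟨T, hTsub, hTcard, hTind⟩

/-- Ramsey's theorem with the bound `R(c, s) ≤ c ^ (s - 1)`: every graph on at least
`c ^ (s - 1)` vertices contains an independent set of size `c` or a clique of size `s`. -/
theorem ramsey_bound (c s : ℕ) (hc : 0 < c) (hs : 0 < s)
    {V : Type} [Fintype V] (G : SimpleGraph V) (hn : c ^ (s - 1) ≤ Fintype.card V) :
    (∃ T : Finset V, T.card = c ∧ Paper.IsIndep G ↑T) ∨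
    (∃ T : Finset V, T.card = s ∧ G.IsClique (↑T : Set V)) := by
  classical
  rcases ramsey_aux G c hc (s - 1) Finset.univ (by simpa using hn) with
    ⟨T, _, hTcard, hTind⟩ | ⟨T, _, hTcard, hTcl⟩
  · exact Or.inl ⟨T, hTcard, hTind⟩
  · refine Or.inr ⟨T, ?_, hTcl⟩
    omega
end

section
/- Let G be a graph such that every subgraph of G has a vertex of degree at most D (G is D-degenerate). If M = {x_iy_i : 1 ≤ i ≤ m} is a matching in G with the sets {x_1,…,x_m} and {y_1,…,y_m} disjoint, then there is a subset I of indices of size at least m/(D+1)² such that {x_i : i ∈ I} and {y_i : i ∈ I} are both independent sets. -/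
open SimpleGraph

/-- A `D`-degenerate graph is properly `(D+1)`-colorable (on any finite vertex set). -/
lemma exists_proper_coloring_aux {V : Type} [Fintype V] (G : SimpleGraph V) (D : ℕ)
    (hdeg : ∀ S : Finset V, S.Nonempty → ∃ v ∈ S, ({u | u ∈ S ∧ G.Adj v u}).ncard ≤ D)
    (S : Finset V) :
    ∃ c : V → Fin (D + 1), ∀ u ∈ S, ∀ v ∈ S, G.Adj u v → c u ≠ c v := by
  classical
  induction S using Finset.strongInduction with
  | _ S ih =>
    rcases S.eq_empty_or_nonempty with rfl | hS
    · exact ⟨fun _ => 0, by simp⟩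
    obtain ⟨v, hvS, hv⟩ := hdeg S hS
    obtain ⟨c, hc⟩ := ih (S.erase v) (Finset.erase_ssubset hvS)
    set N : Set V := {u | u ∈ S ∧ G.Adj v u} with hN
    set T : Set (Fin (D + 1)) := c '' N with hT
    have hTcard : T.ncard ≤ D := le_trans (Set.ncard_image_le N.toFinite) hv
    have hne : ∃ a : Fin (D + 1), a ∉ T := by
      by_contra h
      push_neg at h
      have : T = Set.univ := Set.eq_univ_of_forall h
      rw [this, Set.ncard_univ, Nat.card_eq_fintype_card, Fintype.card_fin] at hTcard
      omega
    obtain ⟨a, ha⟩ := hne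
    refine ⟨Function.update c v a, ?_⟩
    intro u hu w hw huw
    have hune : u ≠ w := G.ne_of_adj huw
    by_cases hu' : u = v
    · subst hu'
      have hwv : w ≠ u := hune.symm
      rw [Function.update_self, Function.update_of_ne hwv]
      intro hcontra
      exact ha ⟨w, ⟨hw, huw⟩, hcontra.symm⟩
    · by_cases hw' : w = v
      · subst hw'
        rw [Function.update_self, Function.update_of_ne hu']
        intro hcontra
        exact ha ⟨u, ⟨hu, huw.symm⟩, hcontra⟩
      · rw [Function.update_of_ne hu', Function.update_of_ne hw']
        exact hc u (Finset.mem_erase.mpr ⟨hu', hu⟩) w (Finset.mem_erase.mpr ⟨hw', hw⟩) huw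

/-- In a `D`-degenerate graph, every matching of size `m` contains a sub-matching of
size at least `m / (D + 1)²` whose two sides are both independent sets. -/
theorem degenerate_matching_indep_sides {V : Type} [Fintype V] (G : SimpleGraph V)
    (D m : ℕ)
    (hdeg : ∀ S : Finset V, S.Nonempty → ∃ v ∈ S, ({u | u ∈ S ∧ G.Adj v u}).ncard ≤ D)
    (x y : Fin m → V)
    (hx : Function.Injective x) (hy : Function.Injective y)
    (hxy : ∀ i j, x i ≠ y j)
    (hM : ∀ i, G.Adj (x i) (y i)) :
    ∃ I : Finset (Fin m), m ≤ (D + 1) ^ 2 * I.card ∧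
      Paper.IsIndep G (x '' ↑I) ∧ Paper.IsIndep G (y '' ↑I) := by
  classical
  obtain ⟨c, hc⟩ := exists_proper_coloring_aux G D hdeg Finset.univ
  have hc' : ∀ u v, G.Adj u v → c u ≠ c v := fun u v h =>
    hc u (Finset.mem_univ u) v (Finset.mem_univ v) h
  set f : Fin m → Fin (D + 1) × Fin (D + 1) := fun i => (c (x i), c (y i)) with hf
  -- pigeonhole: some fiber is big
  have hcardt : (Finset.univ : Finset (Fin (D + 1) × Fin (D + 1))).card = (D + 1) ^ 2 := by
    simp [sq]
  obtain ⟨b, -, hb⟩ := Finset.exists_max_image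
    (Finset.univ : Finset (Fin (D + 1) × Fin (D + 1)))
    (fun b => (Finset.univ.filter fun i => f i = b).card)
    ⟨(0, 0), Finset.mem_univ _⟩
  set I : Finset (Fin m) := Finset.univ.filter fun i => f i = b with hI
  have hsum : m = ∑ b' : Fin (D + 1) × Fin (D + 1),
      (Finset.univ.filter fun i => f i = b').card := by
    have h := Finset.card_eq_sum_card_fiberwise
      (f := f) (s := Finset.univ) (t := Finset.univ) (fun i _ => Finset.mem_univ (f i))
    simpa using h
  have hle : m ≤ (D + 1) ^ 2 * I.card := by
    calc m = ∑ b' : Fin (D + 1) × Fin (D + 1),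
        (Finset.univ.filter fun i => f i = b').card := hsum
      _ ≤ ∑ _b' : Fin (D + 1) × Fin (D + 1), I.card :=
          Finset.sum_le_sum fun b' _ => hb b' (Finset.mem_univ b')
      _ = (D + 1) ^ 2 * I.card := by rw [Finset.sum_const, ← hcardt]; simp [mul_comm]
  refine ⟨I, hle, ?_, ?_⟩
  · rintro _ ⟨i, hi, rfl⟩ _ ⟨j, hj, rfl⟩ hne hadj
    have hib : f i = b := (Finset.mem_filter.mp hi).2
    have hjb : f j = b := (Finset.mem_filter.mp hj).2
    have : c (x i) = c (x j) := congrArg Prod.fst (hib.trans hjb.symm)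
    exact hc' _ _ hadj this
  · rintro _ ⟨i, hi, rfl⟩ _ ⟨j, hj, rfl⟩ hne hadj
    have hib : f i = b := (Finset.mem_filter.mp hi).2
    have hjb : f j = b := (Finset.mem_filter.mp hj).2
    have : c (y i) = c (y j) := congrArg Prod.snd (hib.trans hjb.symm)
    exact hc' _ _ hadj this
end

section
/- Let G be a K_{t,t}-free graph, Z ⊆ V(G) with |Z| ≥ 2, H a graph, and η an extended strip decomposition of (G,Z) with pattern H. Then for every vertex v ∈ V(G) \ Z, there exists a set X ⊆ V(G) \ {v} with α(X) ≤ 4t + 6 such that X intersects every leaf path ending at v, where a leaf path is an induced path in G whose first vertex lies in Z. -/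
open SimpleGraph

namespace Paper

/-- An extended strip decomposition of `(G, Z)` with pattern `H`.
`vmap x` is `η(x)`, `emap u v` is `η(uv)`, `tmap u v w` is `η(uvw)`, and
`imap u v` is the interface set `η(uv, v)`. -/
structure ESD {V W : Type*} (G : SimpleGraph V) (Z : Set V) (H : SimpleGraph W) where
  vmap : W → Set V
  emap : W → W → Set V
  tmap : W → W → W → Set V
  imap : W → W → Set V
  emap_symm : ∀ u v, emap u v = emap v u
  tmap_symm12 : ∀ u v w, tmap u v w = tmap v u w
  tmap_symm23 : ∀ u v w, tmap u v w = tmap u w v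
  imap_sub : ∀ u v, H.Adj u v → imap u v ⊆ emap u v
  cover : ∀ g : V, (∃ x, g ∈ vmap x) ∨ (∃ u v, H.Adj u v ∧ g ∈ emap u v) ∨
      (∃ u v w, H.Adj u v ∧ H.Adj v w ∧ H.Adj u w ∧ g ∈ tmap u v w)
  disj_vv : ∀ x y, x ≠ y → Disjoint (vmap x) (vmap y)
  disj_ve : ∀ x u v, H.Adj u v → Disjoint (vmap x) (emap u v)
  disj_vt : ∀ x u v w, Disjoint (vmap x) (tmap u v w)
  disj_ee : ∀ u v u' v', H.Adj u v → H.Adj u' v' → s(u, v) ≠ s(u', v') →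
      Disjoint (emap u v) (emap u' v')
  disj_et : ∀ u v a b c, H.Adj u v → Disjoint (emap u v) (tmap a b c)
  disj_tt : ∀ a b c a' b' c', ({a, b, c} : Set W) ≠ {a', b', c'} →
      Disjoint (tmap a b c) (tmap a' b' c')
  adj_ee : ∀ u v u' v', H.Adj u v → H.Adj u' v' → s(u, v) ≠ s(u', v') →
      ∀ x ∈ emap u v, ∀ y ∈ emap u' v',
        (G.Adj x y ↔ ∃ w p q, s(u, v) = s(p, w) ∧ s(u', v') = s(q, w) ∧
          x ∈ imap p w ∧ y ∈ imap q w)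
  adj_v : ∀ (v : W) (x y : V), x ∈ vmap v → y ∉ vmap v → G.Adj x y →
      ∃ u, H.Adj u v ∧ y ∈ imap u v
  adj_t : ∀ (u v w : W), H.Adj u v → H.Adj v w → H.Adj u w →
      ∀ x ∈ tmap u v w, ∀ y, y ∉ tmap u v w → G.Adj x y →
        (y ∈ imap u v ∩ imap v u) ∨ (y ∈ imap v w ∩ imap w v) ∨ (y ∈ imap u w ∩ imap w u)
  zmap : Z → W
  zmap_inj : Function.Injective zmap
  zmap_deg : ∀ z : Z, ∃ u, H.Adj u (zmap z) ∧ (∀ u', H.Adj u' (zmap z) → u' = u) ∧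
      imap u (zmap z) = {(z : V)}
  zmap_surj : ∀ w : W, (∃ u, H.Adj u w ∧ ∀ u', H.Adj u' w → u' = u) → ∃ z, zmap z = w

/-- `y` is a special neighbor of `x`: they are adjacent in `H` and `α(η(xy, x)) ≥ t`. -/
def SpecialNbr {V W : Type*} {G : SimpleGraph V} {Z : Set V} {H : SimpleGraph W}
    (η : ESD G Z H) (t : ℕ) (x y : W) : Prop :=
  H.Adj x y ∧ ∃ T : Finset V, ↑T ⊆ η.imap y x ∧ T.card = t ∧ IsIndep G ↑T

/-- `Em(x)`: the union of the interface sets `η(xy, x)` over all non-special neighbors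
`y` of `x`. -/
def Em {V W : Type*} {G : SimpleGraph V} {Z : Set V} {H : SimpleGraph W}
    (η : ESD G Z H) (t : ℕ) (x : W) : Set V :=
  ⋃ y ∈ {y | H.Adj x y ∧ ¬ SpecialNbr η t x y}, η.imap y x

end Paper


namespace Paper
section Aux

open SimpleGraph

variable {V W : Type} {G : SimpleGraph V} {Z : Set V} {H : SimpleGraph W}

/-- Union of the triangle parts containing the edge `xy`. -/
def TriU (η : ESD G Z H) (x y : W) : Set V :=
  ⋃ c ∈ {c | H.Adj x c ∧ H.Adj y c}, η.tmap x y c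

/-- Union of the interfaces `η(ux, x)` over non-special neighbors `u ∉ E` of `x`. -/
def ImU (η : ESD G Z H) (t : ℕ) (x : W) (E : Set W) : Set V :=
  ⋃ u ∈ {u | H.Adj x u ∧ u ∉ E ∧ ¬ SpecialNbr η t x u}, η.imap u x

/-- Every subset of `S` has cardinality at most `k`. -/
def SubCard (S : Set V) (k : ℕ) : Prop := ∀ T : Finset V, ↑T ⊆ S → T.card ≤ k

lemma IndepNumLE.mono {S : Set V} {k k' : ℕ} (h : IndepNumLE G S k) (hk : k ≤ k') :
    IndepNumLE G S k' := fun T hT hind => (h T hT hind).trans hk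

lemma SubCard.indepNumLE {S : Set V} {k : ℕ} (h : SubCard S k) : IndepNumLE G S k :=
  fun T hT _ => h T hT

lemma indepNumLE_union {A B : Set V} {k m : ℕ} (hA : IndepNumLE G A k)
    (hB : IndepNumLE G B m) : IndepNumLE G (A ∪ B) (k + m) := by
  intro T hT hind
  classical
  have h1 : (T.filter (· ∈ A)).card ≤ k := by
    refine hA _ ?_ ?_
    · intro a ha; simp only [Finset.coe_filter, Set.mem_setOf_eq] at ha; exact ha.2
    · intro a ha b hb hne
      simp only [Finset.coe_filter, Set.mem_setOf_eq] at ha hb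
      exact hind ha.1 hb.1 hne
  have h2 : (T.filter (fun a => ¬ a ∈ A)).card ≤ m := by
    refine hB _ ?_ ?_
    · intro a ha; simp only [Finset.coe_filter, Set.mem_setOf_eq] at ha
      rcases hT ha.1 with h | h
      · exact absurd h ha.2
      · exact h
    · intro a ha b hb hne
      simp only [Finset.coe_filter, Set.mem_setOf_eq] at ha hb
      exact hind ha.1 hb.1 hne
  calc T.card = (T.filter (· ∈ A)).card + (T.filter (fun a => ¬ a ∈ A)).card :=
        (Finset.card_filter_add_card_filter_not _).symm
    _ ≤ k + m := Nat.add_le_add h1 h2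

lemma subCard_union {A B : Set V} {k m : ℕ} (hA : SubCard A k) (hB : SubCard B m) :
    SubCard (A ∪ B) (k + m) := by
  intro T hT
  classical
  have h1 : (T.filter (· ∈ A)).card ≤ k := by
    refine hA _ ?_
    intro a ha; simp only [Finset.coe_filter, Set.mem_setOf_eq] at ha; exact ha.2
  have h2 : (T.filter (fun a => ¬ a ∈ A)).card ≤ m := by
    refine hB _ ?_
    intro a ha; simp only [Finset.coe_filter, Set.mem_setOf_eq] at ha
    rcases hT ha.1 with h | h
    · exact absurd h ha.2
    · exact h
  calc T.card = (T.filter (· ∈ A)).card + (T.filter (fun a => ¬ a ∈ A)).card :=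
        (Finset.card_filter_add_card_filter_not _).symm
    _ ≤ k + m := Nat.add_le_add h1 h2

variable (η : ESD G Z H) (t : ℕ)

lemma emap_congr {a b x y : W} (h : s(a, b) = s(x, y)) : η.emap a b = η.emap x y := by
  rcases Sym2.eq_iff.mp h with ⟨rfl, rfl⟩ | ⟨rfl, rfl⟩
  · rfl
  · exact η.emap_symm a b

lemma mem_emap_unique {a b x y : W} (hab : H.Adj a b) (hxy : H.Adj x y) {g : V}
    (h1 : g ∈ η.emap a b) (h2 : g ∈ η.emap x y) : s(a, b) = s(x, y) := by
  by_contra hne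
  exact Set.disjoint_left.mp (η.disj_ee a b x y hab hxy hne) h1 h2

lemma adj_of_mem_imaps {u u' x : W} (hu : H.Adj x u) (hu' : H.Adj x u') (hne : u ≠ u')
    {a b : V} (ha : a ∈ η.imap u x) (hb : b ∈ η.imap u' x) : G.Adj a b := by
  have hs : (s(u, x) : Sym2 W) ≠ s(u', x) := by
    intro h
    rcases Sym2.eq_iff.mp h with ⟨h1, _⟩ | ⟨h1, h2⟩
    · exact hne h1
    · exact hu.ne' (h1 ▸ rfl)
  have := η.adj_ee u x u' x hu.symm hu'.symm hs a (η.imap_sub u x hu.symm ha)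
      b (η.imap_sub u' x hu'.symm hb)
  exact this.mpr ⟨x, u, u', rfl, rfl, ha, hb⟩

lemma ne_of_mem_imaps {u u' x : W} (hu : H.Adj x u) (hu' : H.Adj x u') (hne : u ≠ u')
    {a b : V} (ha : a ∈ η.imap u x) (hb : b ∈ η.imap u' x) : a ≠ b := by
  intro h; subst h
  have hs : (s(u, x) : Sym2 W) ≠ s(u', x) := by
    intro h
    rcases Sym2.eq_iff.mp h with ⟨h1, _⟩ | ⟨h1, h2⟩
    · exact hne h1
    · exact hu.ne' (h1 ▸ rfl)
  exact Set.disjoint_left.mp (η.disj_ee u x u' x hu.symm hu'.symm hs)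
    (η.imap_sub u x hu.symm ha) (η.imap_sub u' x hu'.symm hb)

lemma special_unique (hfree : KttFree G t) {x u u' : W} (h : SpecialNbr η t x u)
    (h' : SpecialNbr η t x u') : u = u' := by
  by_contra hne
  obtain ⟨hadj, T, hT, hcard, hind⟩ := h
  obtain ⟨hadj', T', hT', hcard', hind'⟩ := h'
  refine hfree ⟨T, T', ?_, hcard, hcard', hind, hind', ?_⟩
  · rw [Finset.disjoint_left]
    intro a ha ha'
    exact ne_of_mem_imaps η hadj hadj' hne (hT ha) (hT' ha') rfl
  · intro a ha b hb
    exact adj_of_mem_imaps η hadj hadj' hne (hT ha) (hT' hb)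

lemma small_imap {x u : W} (hadj : H.Adj x u) (hns : ¬ SpecialNbr η t x u) :
    IndepNumLE G (η.imap u x) t := by
  intro T hT hind
  by_contra hgt
  push_neg at hgt
  obtain ⟨T', hT'sub, hT'card⟩ := Finset.exists_subset_card_eq hgt.le
  exact hns ⟨hadj, T', (Finset.coe_subset.mpr hT'sub).trans hT, hT'card,
    fun a ha b hb hne => hind (hT'sub ha) (hT'sub hb) hne⟩

lemma imU_bound (x : W) (E : Set W) : IndepNumLE G (ImU η t x E) t := by
  intro T hT hind
  by_contra hgt
  push_neg at hgt
  have hne : T.Nonempty := Finset.card_pos.mp (lt_of_le_of_lt (Nat.zero_le t) hgt)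
  obtain ⟨a, ha⟩ := hne
  obtain ⟨u, hu, hau⟩ := Set.mem_iUnion₂.mp (hT ha)
  obtain ⟨huadj, huE, huns⟩ := hu
  have hall : ∀ b ∈ T, b ∈ η.imap u x := by
    intro b hb
    obtain ⟨u', hu', hbu'⟩ := Set.mem_iUnion₂.mp (hT hb)
    obtain ⟨hu'adj, hu'E, hu'ns⟩ := hu'
    by_cases heq : u' = u
    · exact heq ▸ hbu'
    · exfalso
      have hne2 : a ≠ b := ne_of_mem_imaps η huadj hu'adj (Ne.symm heq) hau hbu'
      exact hind ha hb hne2 (adj_of_mem_imaps η huadj hu'adj (Ne.symm heq) hau hbu')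
  exact huns ⟨huadj, by
    obtain ⟨T', hT'sub, hT'card⟩ := Finset.exists_subset_card_eq hgt.le
    exact ⟨T', fun b hb => hall b (hT'sub hb), hT'card,
      fun b hb c hc hbc => hind (hT'sub hb) (hT'sub hc) hbc⟩⟩

lemma z_mem_emap {z : V} (hz : z ∈ Z) :
    ∃ u w, H.Adj u w ∧ z ∈ η.imap u w ∧ η.zmap ⟨z, hz⟩ = w := by
  obtain ⟨u, hu, _, him⟩ := η.zmap_deg ⟨z, hz⟩
  exact ⟨u, η.zmap ⟨z, hz⟩, hu, by rw [him]; rfl, rfl⟩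

lemma z_notMem_vmap {z : V} (hz : z ∈ Z) (x : W) : z ∉ η.vmap x := by
  obtain ⟨u, w, huw, him, _⟩ := z_mem_emap η hz
  intro h
  exact Set.disjoint_left.mp (η.disj_ve x u w huw) h (η.imap_sub u w huw him)

lemma z_notMem_tmap {z : V} (hz : z ∈ Z) (a b c : W) : z ∉ η.tmap a b c := by
  obtain ⟨u, w, huw, him, _⟩ := z_mem_emap η hz
  intro h
  exact Set.disjoint_left.mp (η.disj_et u w a b c huw) (η.imap_sub u w huw him) h

lemma z_strip {x y : W} (hxy : H.Adj x y) : SubCard (Z ∩ η.emap x y) 2 := by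
  classical
  intro T hT
  have key : ∀ g ∈ T, ∃ hg : g ∈ Z, η.zmap ⟨g, hg⟩ = x ∨ η.zmap ⟨g, hg⟩ = y := by
    intro g hg
    obtain ⟨hgZ, hge⟩ := hT hg
    obtain ⟨u, w, huw, him, hzm⟩ := z_mem_emap η hgZ
    refine ⟨hgZ, ?_⟩
    have hs := mem_emap_unique η huw hxy (η.imap_sub u w huw him) hge
    rcases Sym2.eq_iff.mp hs with ⟨_, rfl⟩ | ⟨rfl, h2⟩
    · exact Or.inr hzm
    · exact Or.inl (hzm.trans h2)
  have : T.card ≤ ({x, y} : Finset W).card := by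
    refine Finset.card_le_card_of_injOn
      (fun g => if hg : g ∈ Z then η.zmap ⟨g, hg⟩ else x) ?_ ?_
    · intro g hg
      obtain ⟨hgZ, hor⟩ := key g hg
      show (if hg : g ∈ Z then η.zmap ⟨g, hg⟩ else x) ∈ ({x, y} : Finset W)
      rw [dif_pos hgZ]
      simp only [Finset.mem_insert, Finset.mem_singleton]
      exact hor
    · intro g hg g' hg' heq
      obtain ⟨hgZ, _⟩ := key g (by simpa using hg)
      obtain ⟨hg'Z, _⟩ := key g' (by simpa using hg')
      have heq' : (if hg : g ∈ Z then η.zmap ⟨g, hg⟩ else x)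
          = (if hg : g' ∈ Z then η.zmap ⟨g', hg⟩ else x) := heq
      rw [dif_pos hgZ, dif_pos hg'Z] at heq'
      have := η.zmap_inj heq'
      exact congrArg Subtype.val this
  have h2 : ({x, y} : Finset W).card ≤ 2 :=
    (Finset.card_insert_le x {y}).trans (by simp)
  exact this.trans h2

lemma tmap_comm12 (a b c : W) : η.tmap a b c = η.tmap b a c := η.tmap_symm12 a b c
lemma tmap_comm23 (a b c : W) : η.tmap a b c = η.tmap a c b := η.tmap_symm23 a b c
lemma tmap_comm13 (a b c : W) : η.tmap a b c = η.tmap c b a := by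
  rw [η.tmap_symm12, η.tmap_symm23, η.tmap_symm12]

/-- Classification of edges entering the strip `η(xy)`. -/
lemma nemap {x y : W} (hxy : H.Adj x y) {p q : V} (hq : q ∈ η.emap x y)
    (hp : p ∉ η.emap x y) (hadj : G.Adj p q) :
    (p ∈ η.vmap x ∧ q ∈ η.imap y x) ∨ (p ∈ η.vmap y ∧ q ∈ η.imap x y) ∨
    (∃ u, H.Adj x u ∧ u ≠ y ∧ p ∈ η.imap u x ∧ q ∈ η.imap y x) ∨
    (∃ u, H.Adj y u ∧ u ≠ x ∧ p ∈ η.imap u y ∧ q ∈ η.imap x y) ∨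
    (∃ c, H.Adj x c ∧ H.Adj y c ∧ p ∈ η.tmap x y c ∧ q ∈ η.imap y x ∧ q ∈ η.imap x y) := by
  rcases η.cover p with ⟨w, hw⟩ | ⟨a, b, hab, hpe⟩ | ⟨a, b, c, hab, hbc, hac, hpt⟩
  · -- p in a vertex part
    have hqw : q ∉ η.vmap w := fun h => Set.disjoint_left.mp (η.disj_ve w x y hxy) h hq
    obtain ⟨u, huw, hqi⟩ := η.adj_v w p q hw hqw hadj
    have hs := mem_emap_unique η huw hxy (η.imap_sub u w huw hqi) hq
    rcases Sym2.eq_iff.mp hs with ⟨rfl, rfl⟩ | ⟨rfl, rfl⟩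
    · exact Or.inr (Or.inl ⟨hw, hqi⟩)
    · exact Or.inl ⟨hw, hqi⟩
  · -- p in another strip
    have hs : (s(a, b) : Sym2 W) ≠ s(x, y) := fun h => hp (emap_congr η h ▸ hpe)
    have hs' : (s(x, y) : Sym2 W) ≠ s(a, b) := fun h => hs h.symm
    obtain ⟨w, pp, qq, h1, h2, hqi, hpi⟩ :=
      (η.adj_ee x y a b hxy hab hs' q hq p hpe).mp hadj.symm
    rcases Sym2.eq_iff.mp h1 with ⟨rfl, rfl⟩ | ⟨rfl, rfl⟩
    · -- pp = x, w = y
      have hyqq : H.Adj y qq := by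
        rcases Sym2.eq_iff.mp h2 with ⟨rfl, rfl⟩ | ⟨rfl, rfl⟩
        · exact hab.symm
        · exact hab
      have hqqx : qq ≠ x := by
        rintro rfl
        exact hp (η.imap_sub _ _ hxy hpi)
      exact Or.inr (Or.inr (Or.inr (Or.inl ⟨qq, hyqq, hqqx, hpi, hqi⟩)))
    · -- pp = y, w = x
      have hxqq : H.Adj x qq := by
        rcases Sym2.eq_iff.mp h2 with ⟨rfl, rfl⟩ | ⟨rfl, rfl⟩
        · exact hab.symm
        · exact hab
      have hqqy : qq ≠ y := by
        rintro rfl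
        apply hp
        rw [η.emap_symm]
        exact η.imap_sub _ _ hxy.symm hpi
      exact Or.inr (Or.inr (Or.inl ⟨qq, hxqq, hqqy, hpi, hqi⟩))
  · -- p in a triangle part
    have hqt : q ∉ η.tmap a b c := fun h =>
      Set.disjoint_left.mp (η.disj_et x y a b c hxy) hq h
    rcases η.adj_t a b c hab hbc hac p hpt q hqt hadj with
      ⟨hq1, hq2⟩ | ⟨hq1, hq2⟩ | ⟨hq1, hq2⟩
    · have hs := mem_emap_unique η hab hxy (η.imap_sub a b hab hq1) hq
      rcases Sym2.eq_iff.mp hs with ⟨rfl, rfl⟩ | ⟨rfl, rfl⟩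
      · exact Or.inr (Or.inr (Or.inr (Or.inr ⟨c, hac, hbc, hpt, hq2, hq1⟩)))
      · refine Or.inr (Or.inr (Or.inr (Or.inr ⟨c, hbc, hac, ?_, hq1, hq2⟩)))
        rw [tmap_comm12] at hpt; exact hpt
    · have hs := mem_emap_unique η hbc hxy (η.imap_sub b c hbc hq1) hq
      rcases Sym2.eq_iff.mp hs with ⟨rfl, rfl⟩ | ⟨rfl, rfl⟩
      · refine Or.inr (Or.inr (Or.inr (Or.inr ⟨a, hab.symm, hac.symm, ?_, hq2, hq1⟩)))
        rw [tmap_comm12, tmap_comm23] at hpt; exact hpt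
      · refine Or.inr (Or.inr (Or.inr (Or.inr ⟨a, hac.symm, hab.symm, ?_, hq1, hq2⟩)))
        rw [tmap_comm13] at hpt; exact hpt
    · have hs := mem_emap_unique η hac hxy (η.imap_sub a c hac hq1) hq
      rcases Sym2.eq_iff.mp hs with ⟨rfl, rfl⟩ | ⟨rfl, rfl⟩
      · refine Or.inr (Or.inr (Or.inr (Or.inr ⟨b, hab, hbc.symm, ?_, hq2, hq1⟩)))
        rw [tmap_comm23] at hpt; exact hpt
      · refine Or.inr (Or.inr (Or.inr (Or.inr ⟨b, hbc.symm, hab, ?_, hq1, hq2⟩)))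
        rw [tmap_comm13, tmap_comm23] at hpt; exact hpt

/-- Crossing lemma: a walk from outside `R` to inside `R` meets `X`, provided every
crossing edge has an endpoint in `X`. -/
lemma walk_cross {R X : Set V}
    (hB : ∀ p q : V, G.Adj p q → q ∈ R → p ∉ R → p ∈ X ∨ q ∈ X) :
    ∀ {a v : V} (P : G.Walk a v), v ∈ R → a ∉ R → ∃ u ∈ P.support, u ∈ X := by
  intro a v P
  induction P with
  | nil => intro hv ha; exact absurd hv ha
  | @cons a b w h P ih =>
    intro hv ha
    by_cases hb : b ∈ R
    · rcases hB a b h hb ha with hx | hx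
      · exact ⟨a, SimpleGraph.Walk.start_mem_support _, hx⟩
      · exact ⟨b, by
          simp only [SimpleGraph.Walk.support_cons, List.mem_cons]
          exact Or.inr (SimpleGraph.Walk.start_mem_support _), hx⟩
    · obtain ⟨u, hu, hux⟩ := ih hv hb
      exact ⟨u, by
        simp only [SimpleGraph.Walk.support_cons, List.mem_cons]
        exact Or.inr hu, hux⟩


lemma imU_mem_of {x u : W} {E : Set W} (hxu : H.Adj x u) (huE : u ∉ E)
    (hns : ¬ SpecialNbr η t x u) {g : V} (hg : g ∈ η.imap u x) : g ∈ ImU η t x E :=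
  Set.mem_iUnion₂.mpr ⟨u, ⟨hxu, huE, hns⟩, hg⟩

lemma mem_emap_xu {x u : W} (hxu : H.Adj x u) {g : V} (hg : g ∈ η.imap u x) :
    g ∈ η.emap x u := by
  rw [η.emap_symm]; exact η.imap_sub u x hxu.symm hg

lemma triU_mem {x s c : W} (hxc : H.Adj x c) (hsc : H.Adj s c) {g : V}
    (hg : g ∈ η.tmap x s c) : g ∈ TriU η x s :=
  Set.mem_iUnion₂.mpr ⟨c, ⟨hxc, hsc⟩, hg⟩

/-- The block construction: a region around the vertex part of `x` (avoiding the
strips towards `E`) together with a bounded-independence hitting set for its boundary. -/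
lemma block (hfree : KttFree G t) (x : W) (E : Set W) :
    ∃ R X : Set V,
      η.vmap x ⊆ R ∧
      (∀ g ∈ X, ∃ a b, H.Adj a b ∧ g ∈ η.emap a b ∧
        ∀ y ∈ E, (s(a, b) : Sym2 W) ≠ s(x, y)) ∧
      IndepNumLE G X (2 * t) ∧
      SubCard (Z ∩ R) 2 ∧
      (∀ u, H.Adj x u → u ∉ E → η.imap u x ⊆ X ∪ R) ∧
      (∀ u, u ∉ E → SpecialNbr η t x u → SpecialNbr η t u x → TriU η x u ⊆ R) ∧
      (∀ p q : V, G.Adj p q → q ∈ R → p ∉ R → p ∈ X ∨ q ∈ X ∨ ∃ y ∈ E, p ∈ η.emap x y) := by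
  classical
  have locIm : ∀ g ∈ ImU η t x E, ∃ a b, H.Adj a b ∧ g ∈ η.emap a b ∧
      ∀ y ∈ E, (s(a, b) : Sym2 W) ≠ s(x, y) := by
    intro g hg
    obtain ⟨u, hu, hgu⟩ := Set.mem_iUnion₂.mp hg
    obtain ⟨hxu, huE, _⟩ := hu
    refine ⟨u, x, hxu.symm, η.imap_sub u x hxu.symm hgu, ?_⟩
    intro y hyE h
    rcases Sym2.eq_iff.mp h with ⟨h1, h2⟩ | ⟨h1, h2⟩
    · exact hxu.ne h1.symm
    · exact huE (by rw [h1]; exact hyE)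
  by_cases hsp : ∃ u, SpecialNbr η t x u ∧ u ∉ E
  case neg =>
    refine ⟨η.vmap x, ImU η t x E, subset_rfl, locIm, (imU_bound η t x E).mono (by omega),
      ?_, ?_, ?_, ?_⟩
    · intro T hT
      have hT0 : T = ∅ := Finset.eq_empty_of_forall_notMem
        (fun g hg => absurd (hT hg).2 (z_notMem_vmap η (hT hg).1 x))
      simp [hT0]
    · intro u hxu huE
      have hns : ¬ SpecialNbr η t x u := fun h => hsp ⟨u, h, huE⟩
      exact fun g hg => Or.inl (imU_mem_of η t hxu huE hns hg)
    · intro u huE hxu _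
      exact absurd ⟨u, hxu, huE⟩ hsp
    · intro p q hadj hqR hpR
      obtain ⟨u, hux, hpi⟩ := η.adj_v x q p hqR hpR hadj.symm
      by_cases huE : u ∈ E
      · exact Or.inr (Or.inr ⟨u, huE, mem_emap_xu η hux.symm hpi⟩)
      · have hns : ¬ SpecialNbr η t x u := fun h => hsp ⟨u, h, huE⟩
        exact Or.inl (imU_mem_of η t hux.symm huE hns hpi)
  case pos =>
    obtain ⟨s, hsps, hsE⟩ := hsp
    have hxs : H.Adj x s := hsps.1
    have huniq : ∀ u, SpecialNbr η t x u → u = s := fun u h => special_unique η t hfree h hsps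
    by_cases hmut : SpecialNbr η t s x
    · -- EB3 : mutual special pair
      have huniq' : ∀ u, SpecialNbr η t s u → u = x := fun u h =>
        special_unique η t hfree h hmut
      refine ⟨η.vmap x ∪ (η.emap x s ∪ (η.vmap s ∪ TriU η x s)),
        ImU η t x E ∪ ImU η t s {x}, fun g hg => Or.inl hg, ?_, ?_, ?_, ?_, ?_, ?_⟩
      · intro g hg
        rcases hg with hg | hg
        · exact locIm g hg
        · obtain ⟨u, hu, hgu⟩ := Set.mem_iUnion₂.mp hg
          obtain ⟨hsu, hux, _⟩ := hu
          refine ⟨u, s, hsu.symm, η.imap_sub u s hsu.symm hgu, ?_⟩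
          intro y hyE h
          rcases Sym2.eq_iff.mp h with ⟨h1, h2⟩ | ⟨h1, h2⟩
          · exact hsE (by rw [h2]; exact hyE)
          · exact hxs.ne h2.symm
      · exact (indepNumLE_union (imU_bound η t x E) (imU_bound η t s {x})).mono
          (by omega)
      · intro T hT
        refine z_strip η hxs T (fun g hg => ⟨(hT hg).1, ?_⟩)
        have h1 := (hT hg).1
        rcases (hT hg).2 with h | h | h | h
        · exact absurd h (z_notMem_vmap η h1 x)
        · exact h
        · exact absurd h (z_notMem_vmap η h1 s)
        · obtain ⟨c, _, hc⟩ := Set.mem_iUnion₂.mp h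
          exact absurd hc (z_notMem_tmap η h1 x s c)
      · intro u hxu huE
        by_cases hus : u = s
        · subst hus
          exact fun g hg => Or.inr (Or.inr (Or.inl (mem_emap_xu η hxu hg)))
        · have hns : ¬ SpecialNbr η t x u := fun h => hus (huniq u h)
          exact fun g hg => Or.inl (Or.inl (imU_mem_of η t hxu huE hns hg))
      · intro u huE hxu _
        have := huniq u hxu; subst this
        exact fun g hg => Or.inr (Or.inr (Or.inr hg))
      · intro p q hadj hqR hpR
        have hpvx : p ∉ η.vmap x := fun h => hpR (Or.inl h)
        have hpes : p ∉ η.emap x s := fun h => hpR (Or.inr (Or.inl h))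
        have hpvs : p ∉ η.vmap s := fun h => hpR (Or.inr (Or.inr (Or.inl h)))
        have hptr : p ∉ TriU η x s := fun h => hpR (Or.inr (Or.inr (Or.inr h)))
        rcases hqR with hq | hq | hq | hq
        · -- q ∈ vmap x
          obtain ⟨u, hux, hpi⟩ := η.adj_v x q p hq hpvx hadj.symm
          by_cases hus : u = s
          · subst hus; exact absurd (mem_emap_xu η hux.symm hpi) hpes
          by_cases huE : u ∈ E
          · exact Or.inr (Or.inr ⟨u, huE, mem_emap_xu η hux.symm hpi⟩)
          · have hns : ¬ SpecialNbr η t x u := fun h => hus (huniq u h)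
            exact Or.inl (Or.inl (imU_mem_of η t hux.symm huE hns hpi))
        · -- q ∈ emap x s
          rcases nemap η hxs hq hpes hadj with ⟨hpv, _⟩ | ⟨hpv, _⟩ |
            ⟨u, hxu, hus, hpi, _⟩ | ⟨u, hsu, hux, hpi, _⟩ | ⟨c, hxc, hsc, hpt, _, _⟩
          · exact absurd hpv hpvx
          · exact absurd hpv hpvs
          · by_cases huE : u ∈ E
            · exact Or.inr (Or.inr ⟨u, huE, mem_emap_xu η hxu hpi⟩)
            · have hns : ¬ SpecialNbr η t x u := fun h => hus (huniq u h)
              exact Or.inl (Or.inl (imU_mem_of η t hxu huE hns hpi))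
          · have hns : ¬ SpecialNbr η t s u := fun h => hux (huniq' u h)
            exact Or.inl (Or.inr (imU_mem_of η t hsu (by simpa using hux) hns hpi))
          · exact absurd (triU_mem η hxc hsc hpt) hptr
        · -- q ∈ vmap s
          obtain ⟨u, hus', hpi⟩ := η.adj_v s q p hq hpvs hadj.symm
          by_cases hux : u = x
          · exact absurd (η.imap_sub x s hxs (hux ▸ hpi)) hpes
          · have hns : ¬ SpecialNbr η t s u := fun h => hux (huniq' u h)
            exact Or.inl (Or.inr (imU_mem_of η t hus'.symm (by simpa using hux) hns hpi))
        · -- q ∈ TriU x s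
          obtain ⟨c, hc, hqt⟩ := Set.mem_iUnion₂.mp hq
          obtain ⟨hxc, hsc⟩ := hc
          have hpt : p ∉ η.tmap x s c := fun h => hptr (triU_mem η hxc hsc h)
          rcases η.adj_t x s c hxs hsc hxc q hqt p hpt hadj.symm with
            ⟨hp1, _⟩ | ⟨_, hp2⟩ | ⟨_, hp2⟩
          · exact absurd (η.imap_sub x s hxs hp1) hpes
          · have hns : ¬ SpecialNbr η t s c := fun h => hxc.ne' (huniq' c h)
            exact Or.inl (Or.inr (imU_mem_of η t hsc (by simpa using hxc.ne') hns hp2))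
          · by_cases hcE : c ∈ E
            · exact Or.inr (Or.inr ⟨c, hcE, mem_emap_xu η hxc hp2⟩)
            · have hns : ¬ SpecialNbr η t x c := fun h => hsc.ne' (huniq c h)
              exact Or.inl (Or.inl (imU_mem_of η t hxc hcE hns hp2))
    · -- EB2 : special neighbor `s`, not mutual
      refine ⟨η.vmap x ∪ η.emap x s, ImU η t x E ∪ η.imap x s,
        fun g hg => Or.inl hg, ?_, ?_, ?_, ?_, ?_, ?_⟩
      · intro g hg
        rcases hg with hg | hg
        · exact locIm g hg
        · refine ⟨x, s, hxs, η.emap_symm x s ▸ η.imap_sub x s hxs hg, ?_⟩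
          intro y hyE h
          rcases Sym2.eq_iff.mp h with ⟨h1, h2⟩ | ⟨h1, h2⟩
          · exact hsE (by rw [h2]; exact hyE)
          · exact hxs.ne h2.symm
      · exact (indepNumLE_union (imU_bound η t x E)
          (small_imap η t hxs.symm hmut)).mono (by omega)
      · intro T hT
        refine z_strip η hxs T (fun g hg => ⟨(hT hg).1, ?_⟩)
        rcases (hT hg).2 with h | h
        · exact absurd h (z_notMem_vmap η (hT hg).1 x)
        · exact h
      · intro u hxu huE
        by_cases hus : u = s
        · subst hus
          exact fun g hg => Or.inr (Or.inr (mem_emap_xu η hxu hg))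
        · have hns : ¬ SpecialNbr η t x u := fun h => hus (huniq u h)
          exact fun g hg => Or.inl (Or.inl (imU_mem_of η t hxu huE hns hg))
      · intro u huE hxu hux
        have := huniq u hxu; subst this
        exact absurd hux hmut
      · intro p q hadj hqR hpR
        have hpvx : p ∉ η.vmap x := fun h => hpR (Or.inl h)
        have hpes : p ∉ η.emap x s := fun h => hpR (Or.inr h)
        rcases hqR with hq | hq
        · obtain ⟨u, hux, hpi⟩ := η.adj_v x q p hq hpvx hadj.symm
          by_cases hus : u = s
          · subst hus; exact absurd (mem_emap_xu η hux.symm hpi) hpes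
          by_cases huE : u ∈ E
          · exact Or.inr (Or.inr ⟨u, huE, mem_emap_xu η hux.symm hpi⟩)
          · have hns : ¬ SpecialNbr η t x u := fun h => hus (huniq u h)
            exact Or.inl (Or.inl (imU_mem_of η t hux.symm huE hns hpi))
        · rcases nemap η hxs hq hpes hadj with ⟨hpv, _⟩ | ⟨_, hq2⟩ |
            ⟨u, hxu, hus, hpi, _⟩ | ⟨_, _, _, _, hq2⟩ | ⟨c, hxc, hsc, hpt, _, hq2⟩
          · exact absurd hpv hpvx
          · exact Or.inr (Or.inl (Or.inr hq2))
          · by_cases huE : u ∈ E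
            · exact Or.inr (Or.inr ⟨u, huE, mem_emap_xu η hxu hpi⟩)
            · have hns : ¬ SpecialNbr η t x u := fun h => hus (huniq u h)
              exact Or.inl (Or.inl (imU_mem_of η t hxu huE hns hpi))
          · exact Or.inr (Or.inl (Or.inr hq2))
          · exact Or.inr (Or.inl (Or.inr hq2))

lemma small_side {a b : W} (hab : H.Adj a b) (h : ¬ (SpecialNbr η t a b ∧ SpecialNbr η t b a)) :
    ∃ S : Set V, (η.imap b a ∩ η.imap a b ⊆ S) ∧ IndepNumLE G S t ∧
      ∀ g ∈ S, g ∈ η.emap a b := by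
  by_cases h1 : SpecialNbr η t a b
  · have h2 : ¬ SpecialNbr η t b a := fun hh => h ⟨h1, hh⟩
    exact ⟨η.imap a b, Set.inter_subset_right, small_imap η t hab.symm h2,
      fun g hg => η.imap_sub a b hab hg⟩
  · exact ⟨η.imap b a, Set.inter_subset_left, small_imap η t hab h1,
      fun g hg => mem_emap_xu η hab hg⟩

lemma assemble {v : V} (R X : Set V) (hvR : v ∈ R) (hvX : v ∉ X)
    (hα : IndepNumLE G X (4 * t + 6)) (hZR : Z ∩ R ⊆ X)
    (hB : ∀ p q : V, G.Adj p q → q ∈ R → p ∉ R → p ∈ X ∨ q ∈ X) :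
    ∃ X' : Set V, v ∉ X' ∧ IndepNumLE G X' (4 * t + 6) ∧
      ∀ z ∈ Z, ∀ P : G.Walk z v, IsInducedPathW G P → ∃ u ∈ P.support, u ∈ X' := by
  refine ⟨X, hvX, hα, ?_⟩
  intro z hz P _
  by_cases hzR : z ∈ R
  · exact ⟨z, P.start_mem_support, hZR ⟨hz, hzR⟩⟩
  · exact walk_cross hB P hvR hzR

/-- The case where `v` lies in a strip whose `y`-end is safe. -/
lemma caseIII_one (hfree : KttFree G t) {v : V} (hv : v ∉ Z) {x y : W}
    (hxy : H.Adj x y) (hve : v ∈ η.emap x y)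
    (hnsp : ¬ SpecialNbr η t y x) (hvi : v ∉ η.imap x y) :
    ∃ X' : Set V, v ∉ X' ∧ IndepNumLE G X' (4 * t + 6) ∧
      ∀ z ∈ Z, ∀ P : G.Walk z v, IsInducedPathW G P → ∃ u ∈ P.support, u ∈ X' := by
  obtain ⟨Rx, Xx, hsub, hloc, hX, hZ2, hexp, _, hb⟩ := block η t hfree x {y}
  set R : Set V := η.emap x y ∪ Rx with hR
  refine assemble t R ((η.imap x y ∪ Xx) ∪ (Z ∩ R)) (Or.inl hve) ?_ ?_
    (fun g hg => Or.inr hg) ?_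
  · rintro ((h | h) | h)
    · exact hvi h
    · obtain ⟨a, b, hab, hve', hne⟩ := hloc v h
      exact hne y rfl (mem_emap_unique η hab hxy hve' hve)
    · exact hv h.1
  · have hZ4 : SubCard (Z ∩ R) 4 := by
      intro T hT
      refine subCard_union (z_strip η hxy) hZ2 T ?_
      intro g hg
      obtain ⟨hgZ, hgR⟩ := hT hg
      rcases hgR with h | h
      · exact Or.inl ⟨hgZ, h⟩
      · exact Or.inr ⟨hgZ, h⟩
    refine (indepNumLE_union (indepNumLE_union (small_imap η t hxy.symm hnsp) hX)
      hZ4.indepNumLE).mono (by omega)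
  · intro p q hadj hq hp
    have hpe : p ∉ η.emap x y := fun h => hp (Or.inl h)
    have hpRx : p ∉ Rx := fun h => hp (Or.inr h)
    rcases hq with hq | hq
    · rcases nemap η hxy hq hpe hadj with ⟨hpv, _⟩ | ⟨_, hqi⟩ |
        ⟨u, hxu, huy, hpi, _⟩ | ⟨_, _, _, _, hqi⟩ | ⟨_, _, _, _, _, hqi⟩
      · exact absurd (hsub hpv) hpRx
      · exact Or.inr (Or.inl (Or.inl hqi))
      · rcases hexp u hxu (by simpa using huy) hpi with h | h
        · exact Or.inl (Or.inl (Or.inr h))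
        · exact absurd h hpRx
      · exact Or.inr (Or.inl (Or.inl hqi))
      · exact Or.inr (Or.inl (Or.inl hqi))
    · rcases hb p q hadj hq hpRx with h | h | ⟨y', hy', hpe'⟩
      · exact Or.inl (Or.inl (Or.inr h))
      · exact Or.inr (Or.inl (Or.inr h))
      · have : y' = y := hy'
        subst this
        exact absurd hpe' hpe

/-- The case where `v` lies in a strip with both ends unsafe. -/
lemma caseIII_two (hfree : KttFree G t) {v : V} (hv : v ∉ Z) {x y : W}
    (hxy : H.Adj x y) (hve : v ∈ η.emap x y) :
    ∃ X' : Set V, v ∉ X' ∧ IndepNumLE G X' (4 * t + 6) ∧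
      ∀ z ∈ Z, ∀ P : G.Walk z v, IsInducedPathW G P → ∃ u ∈ P.support, u ∈ X' := by
  obtain ⟨Rx, Xx, hsubx, hlocx, hXx, hZ2x, hexpx, _, hbx⟩ := block η t hfree x {y}
  obtain ⟨Ry, Xy, hsuby, hlocy, hXy, hZ2y, hexpy, _, hby⟩ := block η t hfree y {x}
  set R : Set V := η.emap x y ∪ (TriU η x y ∪ (Rx ∪ Ry)) with hR
  refine assemble t R ((Xx ∪ Xy) ∪ (Z ∩ R)) (Or.inl hve) ?_ ?_
    (fun g hg => Or.inr hg) ?_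
  · rintro ((h | h) | h)
    · obtain ⟨a, b, hab, hve', hne⟩ := hlocx v h
      exact hne y rfl (mem_emap_unique η hab hxy hve' hve)
    · obtain ⟨a, b, hab, hve', hne⟩ := hlocy v h
      exact hne x rfl ((mem_emap_unique η hab hxy hve' hve).trans Sym2.eq_swap)
    · exact hv h.1
  · have hZ6 : SubCard (Z ∩ R) 6 := by
      intro T hT
      refine subCard_union (z_strip η hxy) (subCard_union hZ2x hZ2y) T ?_
      intro g hg
      obtain ⟨hgZ, hgR⟩ := hT hg
      rcases hgR with h | h | h | h
      · exact Or.inl ⟨hgZ, h⟩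
      · obtain ⟨c, _, hc⟩ := Set.mem_iUnion₂.mp h
        exact absurd hc (z_notMem_tmap η hgZ x y c)
      · exact Or.inr (Or.inl ⟨hgZ, h⟩)
      · exact Or.inr (Or.inr ⟨hgZ, h⟩)
    refine (indepNumLE_union (indepNumLE_union hXx hXy) hZ6.indepNumLE).mono (by omega)
  · intro p q hadj hq hp
    have hpe : p ∉ η.emap x y := fun h => hp (Or.inl h)
    have hptr : p ∉ TriU η x y := fun h => hp (Or.inr (Or.inl h))
    have hpRx : p ∉ Rx := fun h => hp (Or.inr (Or.inr (Or.inl h)))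
    have hpRy : p ∉ Ry := fun h => hp (Or.inr (Or.inr (Or.inr h)))
    rcases hq with hq | hq | hq | hq
    · rcases nemap η hxy hq hpe hadj with ⟨hpv, _⟩ | ⟨hpv, _⟩ |
        ⟨u, hxu, huy, hpi, _⟩ | ⟨u, hyu, hux, hpi, _⟩ | ⟨c, hxc, hyc, hpt, _, _⟩
      · exact absurd (hsubx hpv) hpRx
      · exact absurd (hsuby hpv) hpRy
      · rcases hexpx u hxu (by simpa using huy) hpi with h | h
        · exact Or.inl (Or.inl (Or.inl h))
        · exact absurd h hpRx
      · rcases hexpy u hyu (by simpa using hux) hpi with h | h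
        · exact Or.inl (Or.inl (Or.inr h))
        · exact absurd h hpRy
      · exact absurd (triU_mem η hxc hyc hpt) hptr
    · obtain ⟨c, hc, hqt⟩ := Set.mem_iUnion₂.mp hq
      obtain ⟨hxc, hyc⟩ := hc
      have hpt : p ∉ η.tmap x y c := fun h => hptr (triU_mem η hxc hyc h)
      rcases η.adj_t x y c hxy hyc hxc q hqt p hpt hadj.symm with
        ⟨hp1, _⟩ | ⟨_, hp2⟩ | ⟨_, hp2⟩
      · exact absurd (η.imap_sub x y hxy hp1) hpe
      · rcases hexpy c hyc (by simpa using fun h => hxc.ne' h) hp2 with h | h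
        · exact Or.inl (Or.inl (Or.inr h))
        · exact absurd h hpRy
      · rcases hexpx c hxc (by simpa using fun h => hyc.ne' h) hp2 with h | h
        · exact Or.inl (Or.inl (Or.inl h))
        · exact absurd h hpRx
    · rcases hbx p q hadj hq hpRx with h | h | ⟨y', hy', hpe'⟩
      · exact Or.inl (Or.inl (Or.inl h))
      · exact Or.inr (Or.inl (Or.inl h))
      · have : y' = y := hy'
        subst this
        exact absurd hpe' hpe
    · rcases hby p q hadj hq hpRy with h | h | ⟨y', hy', hpe'⟩
      · exact Or.inl (Or.inl (Or.inr h))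
      · exact Or.inr (Or.inl (Or.inr h))
      · have : y' = x := hy'
        subst this
        exact absurd (by rw [η.emap_symm] at hpe'; exact hpe') hpe

/-- The case where `v` lies in a vertex part, or in a triangle part on a mutually
special edge. -/
lemma caseI (hfree : KttFree G t) {v : V} (hv : v ∉ Z) {x : W}
    (hvloc : ∀ (Rx : Set V), η.vmap x ⊆ Rx →
      (∀ u, u ∉ (∅ : Set W) → SpecialNbr η t x u → SpecialNbr η t u x → TriU η x u ⊆ Rx) →
      v ∈ Rx)
    (hvem : ∀ a b : W, H.Adj a b → v ∉ η.emap a b) :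
    ∃ X' : Set V, v ∉ X' ∧ IndepNumLE G X' (4 * t + 6) ∧
      ∀ z ∈ Z, ∀ P : G.Walk z v, IsInducedPathW G P → ∃ u ∈ P.support, u ∈ X' := by
  obtain ⟨Rx, Xx, hsub, hloc, hX, hZ2, hexp, htri, hb⟩ := block η t hfree x ∅
  refine assemble t Rx (Xx ∪ (Z ∩ Rx)) (hvloc Rx hsub htri) ?_ ?_
    (fun g hg => Or.inr hg) ?_
  · rintro (h | h)
    · obtain ⟨a, b, hab, hve', _⟩ := hloc v h
      exact hvem a b hab hve'
    · exact hv h.1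
  · exact (indepNumLE_union hX hZ2.indepNumLE).mono (by omega)
  · intro p q hadj hq hp
    rcases hb p q hadj hq hp with h | h | ⟨y', hy', _⟩
    · exact Or.inl (Or.inl h)
    · exact Or.inr (Or.inl h)
    · exact absurd hy' (Set.notMem_empty y')

end Aux
end Paper


/-- In an extended strip decomposition of a `K_{t,t}`-free graph, for every vertex `v`
outside `Z` there is a set `X` avoiding `v`, of independence number at most `4t + 6`,
meeting every leaf path (induced path starting in `Z`) ending at `v`. -/
theorem hit_all_leaf_paths {V W : Type} [Fintype V]
    (G : SimpleGraph V) (Z : Set V) (H : SimpleGraph W) (t : ℕ)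
    (hfree : Paper.KttFree G t) (hZ : Z.Nontrivial)
    (η : Paper.ESD G Z H) (v : V) (hv : v ∉ Z) :
    ∃ X : Set V, v ∉ X ∧ Paper.IndepNumLE G X (4 * t + 6) ∧
      ∀ z ∈ Z, ∀ P : G.Walk z v, Paper.IsInducedPathW G P → ∃ u ∈ P.support, u ∈ X := by
  classical
  rcases η.cover v with ⟨x, hvx⟩ | ⟨x, y, hxy, hve⟩ | ⟨x, y, c, hxy, hyc, hxc, hvt⟩
  · -- v in a vertex part
    exact Paper.caseI η t hfree hv (fun Rx hsub _ => hsub hvx)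
      (fun a b hab h => Set.disjoint_left.mp (η.disj_ve x a b hab) hvx h)
  · -- v in a strip
    exact Paper.caseIII_two η t hfree hv hxy hve
  · -- v in a triangle part
    by_cases hm1 : Paper.SpecialNbr η t x y ∧ Paper.SpecialNbr η t y x
    · refine Paper.caseI η t hfree hv (x := x)
        (fun Rx _ htri => htri y (Set.notMem_empty y) hm1.1 hm1.2
          (Paper.triU_mem η hxc hyc hvt))
        (fun a b hab h => Set.disjoint_left.mp (η.disj_et a b x y c hab) h hvt)
    by_cases hm2 : Paper.SpecialNbr η t y c ∧ Paper.SpecialNbr η t c y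
    · have hvt' : v ∈ η.tmap y c x := by
        have h := hvt
        rw [η.tmap_symm12 x y c, η.tmap_symm23 y x c] at h
        exact h
      refine Paper.caseI η t hfree hv (x := y)
        (fun Rx _ htri => htri c (Set.notMem_empty c) hm2.1 hm2.2
          (Paper.triU_mem η hxy.symm hxc.symm hvt'))
        (fun a b hab h => Set.disjoint_left.mp (η.disj_et a b x y c hab) h hvt)
    by_cases hm3 : Paper.SpecialNbr η t x c ∧ Paper.SpecialNbr η t c x
    · have hvt' : v ∈ η.tmap x c y := by
        have h := hvt
        rw [η.tmap_symm23 x y c] at h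
        exact h
      refine Paper.caseI η t hfree hv (x := x)
        (fun Rx _ htri => htri c (Set.notMem_empty c) hm3.1 hm3.2
          (Paper.triU_mem η hxy hyc.symm hvt'))
        (fun a b hab h => Set.disjoint_left.mp (η.disj_et a b x y c hab) h hvt)
    · obtain ⟨S1, hS1, hS1b, hS1e⟩ := Paper.small_side η t hxy hm1
      obtain ⟨S2, hS2, hS2b, hS2e⟩ := Paper.small_side η t hyc hm2
      obtain ⟨S3, hS3, hS3b, hS3e⟩ := Paper.small_side η t hxc hm3
      refine Paper.assemble t (η.tmap x y c) (S1 ∪ (S2 ∪ S3)) hvt ?_ ?_ ?_ ?_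
      · rintro (h | h | h)
        · exact Set.disjoint_left.mp (η.disj_et x y x y c hxy) (hS1e v h) hvt
        · exact Set.disjoint_left.mp (η.disj_et y c x y c hyc) (hS2e v h) hvt
        · exact Set.disjoint_left.mp (η.disj_et x c x y c hxc) (hS3e v h) hvt
      · exact (Paper.indepNumLE_union hS1b
          (Paper.indepNumLE_union hS2b hS3b)).mono (by omega)
      · exact fun g hg => absurd hg.2 (Paper.z_notMem_tmap η hg.1 x y c)
      · intro p q hadj hq hp
        rcases η.adj_t x y c hxy hyc hxc q hq p hp hadj.symm with
          ⟨ha, hb2⟩ | ⟨ha, hb2⟩ | ⟨ha, hb2⟩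
        · exact Or.inl (Or.inl (hS1 ⟨hb2, ha⟩))
        · exact Or.inl (Or.inr (Or.inl (hS2 ⟨hb2, ha⟩)))
        · exact Or.inl (Or.inr (Or.inr (hS3 ⟨hb2, ha⟩)))
end

section
/- Let G be a graph and X a cooperative set in G. Let D₁,…,D_k be the connected components of G \ N[X]. Then for every i, the set X ∪ N(D_i) is a cooperative set in the induced subgraph on X ∪ N[D_i]. -/
open SimpleGraph

/-- If `C` induces a connected subgraph, `C ⊆ S`, and every vertex of `S \ C` has a
neighbor in `C`, then `S` induces a connected subgraph. -/
lemma connExtend {V : Type} (G : SimpleGraph V) {C S : Set V}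
    (hC : Paper.ConnSet G C) (hCS : C ⊆ S)
    (h : ∀ v ∈ S, v ∉ C → ∃ u ∈ C, G.Adj v u) : Paper.ConnSet G S := by
  have hCne : C.Nonempty := by
    obtain ⟨⟨c, hc⟩⟩ := hC.nonempty
    exact ⟨c, hc⟩
  have hSne : S.Nonempty := ⟨hCne.choose, hCS hCne.choose_spec⟩
  let f : G.induce C →g G.induce S :=
    ⟨fun x => ⟨x.1, hCS x.2⟩, fun {a b} hab => hab⟩
  have key : ∀ v (hv : v ∈ S), ∃ c, ∃ hc : c ∈ C,
      (G.induce S).Reachable ⟨v, hv⟩ ⟨c, hCS hc⟩ := by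
    intro v hv
    by_cases hvC : v ∈ C
    · exact ⟨v, hvC, SimpleGraph.Reachable.refl _⟩
    · obtain ⟨u, hu, hadj⟩ := h v hv hvC
      exact ⟨u, hu, SimpleGraph.Adj.reachable
        (show (G.induce S).Adj ⟨v, hv⟩ ⟨u, hCS hu⟩ from hadj)⟩
  haveI : Nonempty ↥S := ⟨⟨hSne.choose, hSne.choose_spec⟩⟩
  refine SimpleGraph.Connected.mk ?_
  intro a b
  obtain ⟨ca, hca, ra⟩ := key a.1 a.2
  obtain ⟨cb, hcb, rb⟩ := key b.1 b.2
  have rc : (G.induce C).Reachable ⟨ca, hca⟩ ⟨cb, hcb⟩ := hC.preconnected _ _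
  have rS : (G.induce S).Reachable ⟨ca, hCS hca⟩ ⟨cb, hCS hcb⟩ := rc.map f
  exact (ra.trans rS).trans rb.symm

/-- If `X` is cooperative in `G` and `D` is a connected component of `G \ N[X]`, then
`X ∪ N(D)` is cooperative in the induced subgraph on `X ∪ N[D]`. -/
theorem cooperative_of_component {V : Type} [Fintype V] (G : SimpleGraph V)
    (X Dset : Set V)
    (hX : Paper.Cooperative G Set.univ X)
    (hD : Paper.IsCompAvoiding G (Paper.nbhdC G X) Dset) :
    Paper.Cooperative G (X ∪ Paper.nbhdC G Dset) (X ∪ Paper.nbhdS G Dset) := by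
  obtain ⟨-, hXconn, h3, h4, h5⟩ := hX
  obtain ⟨hDsub, hDconn, hDcomp⟩ := hD
  set ND := Paper.nbhdS G Dset with hNDdef
  set U' := X ∪ Paper.nbhdC G Dset with hU'def
  have hDX : ∀ d ∈ Dset, d ∉ X := fun d hd hx => hDsub hd (Or.inl hx)
  have hXnD : ∀ x ∈ X, ∀ d ∈ Dset, ¬ G.Adj x d := by
    intro x hx d hd hadj
    exact hDsub hd (Or.inr ⟨hDX d hd, x, hx, hadj⟩)
  have hNDX : ∀ v ∈ ND, v ∉ X := by
    rintro v ⟨hvD, d, hd, hadj⟩ hvX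
    exact hXnD v hvX d hd hadj.symm
  have hNDNX : ∀ v ∈ ND, ∃ x ∈ X, G.Adj x v := by
    rintro v hv
    obtain ⟨hvD, d, hd, hadj⟩ := hv
    by_contra hno
    push_neg at hno
    have hvC : v ∉ Paper.nbhdC G X := by
      rintro (h | ⟨h1, x, hx, hxa⟩)
      · exact hNDX v ⟨hvD, d, hd, hadj⟩ h
      · exact hno x hx hxa
    exact hDcomp v hvD hvC ⟨d, hd, hadj.symm⟩
  -- U' \ (X ∪ ND) = Dset
  have hdiffU : U' \ (X ∪ ND) = Dset := by
    ext v
    constructor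
    · rintro ⟨hvU, hvX'⟩
      rcases hvU with h | h | h
      · exact absurd (Or.inl h) hvX'
      · exact h
      · exact absurd (Or.inr h) hvX'
    · intro hv
      refine ⟨Or.inr (Or.inl hv), ?_⟩
      rintro (h | h)
      · exact hDX v hv h
      · exact h.1 hv
  have hd1 : Paper.delta1 G U' (X ∪ ND) = ND := by
    ext v
    simp only [Paper.delta1, Set.mem_setOf_eq]
    constructor
    · rintro ⟨hvX', u, hu, hadj⟩
      rw [hdiffU] at hu
      rcases hvX' with hvX | hvND
      · exact absurd hadj (hXnD v hvX u hu)
      · exact hvND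
    · intro hv
      obtain ⟨hvD, d, hd, hadj⟩ := hv
      refine ⟨Or.inr ⟨hvD, d, hd, hadj⟩, d, ?_, hadj.symm⟩
      rw [hdiffU]; exact hd
  have hXdiff : (X ∪ ND) \ ND = X := by
    ext v
    constructor
    · rintro ⟨hv | hv, hvND⟩
      · exact hv
      · exact absurd hv hvND
    · intro hv
      exact ⟨Or.inl hv, fun h => hNDX v h hv⟩
  have hd2 : Paper.delta2 G U' (X ∪ ND) = Paper.delta1 G U' X := by
    unfold Paper.delta2
    rw [hd1, hXdiff]
  have hd2sub : Paper.delta1 G U' X ⊆ Paper.delta1 G Set.univ X := by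
    rintro v ⟨hvX, u, ⟨hu1, hu2⟩, hadj⟩
    exact ⟨hvX, u, ⟨Set.mem_univ u, hu2⟩, hadj⟩
  refine ⟨?_, ?_, ?_, ?_, ?_⟩
  · rintro v (h | h)
    · exact Or.inl h
    · exact Or.inr (Or.inr h)
  · refine connExtend G hXconn Set.subset_union_left ?_
    rintro v (hv | hv) hvX
    · exact absurd hv hvX
    · obtain ⟨x, hx, hadj⟩ := hNDNX v hv
      exact ⟨x, hx, hadj.symm⟩
  · rw [hd1, hXdiff]
    intro v hv
    obtain ⟨x, hx, hadj⟩ := hNDNX v hv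
    exact ⟨x, hx, hadj.symm⟩
  · rw [hd1, hd2]
    intro v hv
    obtain ⟨u, ⟨huX, hud1⟩, hadj⟩ := h3 v (hd2sub hv)
    refine ⟨u, ⟨Or.inl huX, ?_⟩, hadj⟩
    rintro (h | h)
    · exact hNDX u h huX
    · exact hud1 (hd2sub h)
  · rw [hd1, hd2]
    have hfinal : (X ∪ ND) \ (ND ∪ Paper.delta1 G U' X) = X \ Paper.delta1 G U' X := by
      ext v
      constructor
      · rintro ⟨hv | hv, hvN⟩
        · exact ⟨hv, fun h => hvN (Or.inr h)⟩
        · exact absurd (Or.inl hv) hvN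
      · rintro ⟨hv, hvd⟩
        refine ⟨Or.inl hv, ?_⟩
        rintro (h | h)
        · exact hNDX v h hv
        · exact hvd h
    rw [hfinal]
    have hC1 : Paper.ConnSet G (X \ Paper.delta1 G Set.univ X) := by
      refine connExtend G h5 (Set.diff_subset_diff_right Set.subset_union_left) ?_
      intro v hv hvC
      have hv2 : v ∈ Paper.delta2 G Set.univ X := by
        by_contra hv2
        exact hvC ⟨hv.1, fun h => h.elim hv.2 hv2⟩
      exact h4 v hv2
    refine connExtend G hC1 (Set.diff_subset_diff_right hd2sub) ?_
    intro v hv hvC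
    have hv1 : v ∈ Paper.delta1 G Set.univ X := by
      by_contra hv1
      exact hvC ⟨hv.1, hv1⟩
    exact h3 v hv1
end

section
/- Let G be a graph, X a cooperative set in G, and C ⊆ (V(G) \ X) ∪ δ₁(X). Let D be a connected component of G \ (X ∪ C) that is not anticomplete to X \ C. Then the set X' = ((X \ δ₁(X)) ∪ N(D)) ∩ (X \ C) is cooperative in the induced subgraph G' = (N[D] \ C) ∪ X'. -/
open SimpleGraph

/-- If `S` induces a connected subgraph, `S ⊆ T`, and every vertex of `T` is in `S` or has a
neighbor in `S`, then `T` induces a connected subgraph. -/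
lemma connset_extend {V : Type} (G : SimpleGraph V) {S T : Set V} (hST : S ⊆ T)
    (hS : Paper.ConnSet G S)
    (h : ∀ t ∈ T, t ∈ S ∨ ∃ s ∈ S, G.Adj t s) : Paper.ConnSet G T := by
  have hne : S.Nonempty := by
    obtain ⟨⟨x, hx⟩⟩ := hS.nonempty
    exact ⟨x, hx⟩
  let f : G.induce S →g G.induce T := ⟨fun x => ⟨x.1, hST x.2⟩, fun {a b} hab => hab⟩
  have key : ∀ (u : V) (hu : u ∈ T), ∃ (s : V) (hs : s ∈ S),
      (G.induce T).Reachable ⟨u, hu⟩ ⟨s, hST hs⟩ := by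
    intro u hu
    rcases h u hu with hus | ⟨s, hs, hadj⟩
    · exact ⟨u, hus, Reachable.refl _⟩
    · exact ⟨s, hs, SimpleGraph.Adj.reachable (show G.Adj u s from hadj)⟩
  rw [Paper.ConnSet, connected_iff]
  refine ⟨?_, ⟨⟨hne.choose, hST hne.choose_spec⟩⟩⟩
  rintro ⟨u, hu⟩ ⟨v, hv⟩
  obtain ⟨s, hs, hru⟩ := key u hu
  obtain ⟨s', hs', hrv⟩ := key v hv
  have hmid : (G.induce T).Reachable ⟨s, hST hs⟩ ⟨s', hST hs'⟩ :=
    (hS.preconnected ⟨s, hs⟩ ⟨s', hs'⟩).map f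
  exact hru.trans (hmid.trans hrv.symm)

/-- Cooperative sets survive deletion: if `X` is cooperative in `G`,
`C ⊆ (V(G) \ X) ∪ δ₁(X)`, and `D` is a component of `G \ (X ∪ C)` not anticomplete to
`X \ C`, then `X' = ((X \ δ₁(X)) ∪ N(D)) ∩ (X \ C)` is cooperative in the induced
subgraph on `(N[D] \ C) ∪ X'`. -/
theorem cooperative_deletion {V : Type} [Fintype V] (G : SimpleGraph V)
    (X C Dset : Set V)
    (hX : Paper.Cooperative G Set.univ X)
    (hC : C ⊆ (Set.univ \ X) ∪ Paper.delta1 G Set.univ X)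
    (hD : Paper.IsCompAvoiding G (X ∪ C) Dset)
    (hmeet : ∃ d ∈ Dset, ∃ x ∈ X \ C, G.Adj d x) :
    Paper.Cooperative G
      ((Paper.nbhdC G Dset \ C) ∪
        (((X \ Paper.delta1 G Set.univ X) ∪ Paper.nbhdS G Dset) ∩ (X \ C)))
      (((X \ Paper.delta1 G Set.univ X) ∪ Paper.nbhdS G Dset) ∩ (X \ C)) := by

  classical
  obtain ⟨-, hXconn, h1, h2, hconn2⟩ := hX
  obtain ⟨hDsub, hDconn, hDcomp⟩ := hD
  set δ1 := Paper.delta1 G Set.univ X with hd1def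
  set δ2 := Paper.delta2 G Set.univ X with hd2def
  set N := Paper.nbhdS G Dset with hNdef
  set X' := ((X \ δ1) ∪ N) ∩ (X \ C) with hX'def
  set U' := (Paper.nbhdC G Dset \ C) ∪ X' with hU'def
  have hDX : ∀ d ∈ Dset, d ∉ X := fun d hd hdX => (hDsub hd) (Or.inl hdX)
  have hDC : ∀ d ∈ Dset, d ∉ C := fun d hd hdC => (hDsub hd) (Or.inr hdC)
  have hCX : ∀ c ∈ C, c ∈ X → c ∈ δ1 := by
    intro c hc hcX
    rcases hC hc with h | h
    · exact absurd hcX h.2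
    · exact h
  have hNX : ∀ v, v ∈ N → v ∈ X → v ∈ δ1 := by
    intro v hv hvX
    obtain ⟨hvD, d, hd, hadj⟩ := hv
    exact ⟨hvX, d, ⟨Set.mem_univ d, hDX d hd⟩, hadj.symm⟩
  have hXd1C : X \ δ1 ⊆ X \ C := fun v hv => ⟨hv.1, fun hc => hv.2 (hCX _ hc hv.1)⟩
  have hX'sub : X' ⊆ X := fun v hv => hv.2.1
  have hUX' : ∀ u, u ∈ U' → u ∉ X' → u ∉ X := by
    intro u hu hu' huX
    rcases hu with ⟨hnb, hnc⟩ | h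
    · rcases hnb with hD' | hN
      · exact hDX u hD' huX
      · exact hu' ⟨Or.inr hN, huX, hnc⟩
    · exact hu' h
  have hδ1'sub : Paper.delta1 G U' X' ⊆ δ1 := by
    rintro v ⟨hvX', u, ⟨huU, huX'⟩, hadj⟩
    exact ⟨hX'sub hvX', u, ⟨Set.mem_univ u, hUX' u huU huX'⟩, hadj⟩
  have hkey : X' \ Paper.delta1 G U' X' = X \ δ1 := by
    ext v
    constructor
    · rintro ⟨hvX', hv1'⟩
      refine ⟨hvX'.2.1, ?_⟩
      rcases hvX'.1 with h | hvN
      · exact h.2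
      · exfalso
        obtain ⟨hvD, d, hd, hadj⟩ := hvN
        exact hv1' ⟨hvX', d, ⟨Or.inl ⟨Or.inl hd, hDC d hd⟩,
          fun hdX' => hDX d hd (hX'sub hdX')⟩, hadj.symm⟩
    · intro hv
      exact ⟨⟨Or.inl hv, hXd1C hv⟩, fun hv1' => hv.2 (hδ1'sub hv1')⟩
  have hδ2'sub : Paper.delta2 G U' X' ⊆ δ2 := by
    rintro v ⟨hv1, u, ⟨huU, hu2⟩, hadj⟩
    rw [hkey] at hv1 hu2
    exact ⟨hv1, u, ⟨Set.mem_univ u, hu2⟩, hadj⟩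
  have hX1conn : Paper.ConnSet G (X \ δ1) := by
    refine connset_extend G (fun v hv => ⟨hv.1, fun h => hv.2 (Or.inl h)⟩) hconn2 ?_
    intro t ht
    by_cases ht2 : t ∈ δ2
    · exact Or.inr (h2 t ht2)
    · exact Or.inl ⟨ht.1, fun h => h.elim ht.2 ht2⟩
  have hX'conn : Paper.ConnSet G X' := by
    refine connset_extend G (fun v hv => ⟨Or.inl hv, hXd1C hv⟩) hX1conn ?_
    intro t ht
    rcases ht.1 with h | hN
    · exact Or.inl h
    · exact Or.inr (h1 t (hNX t hN ht.2.1))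
  refine ⟨Set.subset_union_right, hX'conn, ?_, ?_, ?_⟩
  · intro v hv
    obtain ⟨u, hu, hadj⟩ := h1 v (hδ1'sub hv)
    exact ⟨u, by rw [hkey]; exact hu, hadj⟩
  · intro v hv
    obtain ⟨u, hu, hadj⟩ := h2 v (hδ2'sub hv)
    have huX1 : u ∈ X \ δ1 := ⟨hu.1, fun h => hu.2 (Or.inl h)⟩
    refine ⟨u, ⟨⟨Or.inl huX1, hXd1C huX1⟩, ?_⟩, hadj⟩
    rintro (h | h)
    · exact hu.2 (Or.inl (hδ1'sub h))
    · exact hu.2 (Or.inr (hδ2'sub h))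
  · have heq : X' \ (Paper.delta1 G U' X' ∪ Paper.delta2 G U' X')
        = (X \ δ1) \ Paper.delta2 G U' X' := by
      rw [← Set.diff_diff, hkey]
    rw [heq]
    refine connset_extend G (fun v hv => ⟨⟨hv.1, fun h => hv.2 (Or.inl h)⟩,
      fun h => hv.2 (Or.inr (hδ2'sub h))⟩) hconn2 ?_
    intro t ht
    by_cases ht2 : t ∈ δ2
    · exact Or.inr (h2 t ht2)
    · exact Or.inl ⟨ht.1.1, fun h => h.elim ht.1.2 ht2⟩
end
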